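/- arXiv:0902.2544 — 5 statements merged into one kernel-verified Lean document; each statement's English description precedes it below -/
import Mathlib

section
/- Let f be a C^1 function on (0,1) satisfying x·f'(x) = (1-x)·f'(1-x) for all x in (0,1). Fix θ in (0,1) and define φ(x) = θ·f(x) + (1-θ)·f(1-x). Then φ is twice differentiable at θ and φ''(θ) = -f'(θ)/(1-θ). -/
/-!
Substituting the symmetry relation `f'(1 - x) = x f'(x) / (1 - x)` into
`φ'(x) = θ f'(x) - (1 - θ) f'(1 - x)` gives `φ'(x) = (θ - x) · f'(x) / (1 - x)` on `(0, 1)`.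
This vanishes at `θ`, so its difference quotients at `θ` are `-f'(x) / (1 - x)`, which tend to
`-f'(θ) / (1 - θ)` by continuity of `f'` alone.
-/

open Set Filter Topology

theorem hasDerivAt_sub_mul_of_continuousAt {𝕜 : Type*} [NontriviallyNormedField 𝕜]
    {h : 𝕜 → 𝕜} {a : 𝕜} (hh : ContinuousAt h a) :
    HasDerivAt (fun x => (a - x) * h x) (-h a) a := by
  rw [hasDerivAt_iff_tendsto_slope]
  have hslope : ∀ x ∈ ({a}ᶜ : Set 𝕜), -h x = slope (fun x => (a - x) * h x) a x := by
    intro x hx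
    have hxa : x - a ≠ 0 := sub_ne_zero.mpr hx
    rw [slope_def_field, sub_self, zero_mul, sub_zero]
    field_simp
    ring
  exact (hh.neg.tendsto.mono_left nhdsWithin_le_nhds).congr' (eventuallyEq_nhdsWithin_of_eqOn hslope)

theorem hasDerivAt_phi_of_symm {f f' : ℝ → ℝ}
    (hderiv : ∀ x ∈ Ioo (0:ℝ) 1, HasDerivAt f (f' x) x)
    (hfe : ∀ x ∈ Ioo (0:ℝ) 1, x * f' x = (1 - x) * f' (1 - x))
    (θ : ℝ) {x : ℝ} (hx : x ∈ Ioo (0:ℝ) 1) :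
    HasDerivAt (fun x => θ * f x + (1 - θ) * f (1 - x)) ((θ - x) * (f' x / (1 - x))) x := by
  have hx' : 1 - x ∈ Ioo (0:ℝ) 1 := ⟨by linarith [hx.2], by linarith [hx.1]⟩
  have hφ := ((hderiv x hx).const_mul θ).add
    (((hderiv (1 - x) hx').comp_const_sub 1 x).const_mul (1 - θ))
  have hreflect : f' (1 - x) = x * f' x / (1 - x) := by
    rw [hfe x hx, mul_div_cancel_left₀ _ (by linarith [hx.2])]
  refine hφ.congr_deriv ?_
  rw [hreflect]
  field_simp [show (1 : ℝ) - x ≠ 0 by linarith [hx.2]]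
  ring

theorem phi_second_deriv (f f' : ℝ → ℝ)
    (hderiv : ∀ x ∈ Ioo (0:ℝ) 1, HasDerivAt f (f' x) x)
    (hcont : ContinuousOn f' (Ioo (0:ℝ) 1))
    (hfe : ∀ x ∈ Ioo (0:ℝ) 1, x * f' x = (1 - x) * f' (1 - x))
    (θ : ℝ) (hθ : θ ∈ Ioo (0:ℝ) 1) :
    HasDerivAt (deriv (fun x => θ * f x + (1 - θ) * f (1 - x)))
      (-f' θ / (1 - θ)) θ := by
  have hnhds : Ioo (0:ℝ) 1 ∈ 𝓝 θ := Ioo_mem_nhds hθ.1 hθ.2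
  have hderiv_phi : deriv (fun x => θ * f x + (1 - θ) * f (1 - x))
      =ᶠ[𝓝 θ] fun x => (θ - x) * (f' x / (1 - x)) :=
    eventually_of_mem hnhds fun x hx => (hasDerivAt_phi_of_symm hderiv hfe θ hx).deriv
  have hq : ContinuousAt (fun x => f' x / (1 - x)) θ :=
    (hcont.continuousAt hnhds).div (continuousAt_const.sub continuousAt_id) (by linarith [hθ.2])
  rw [neg_div]
  exact (hasDerivAt_sub_mul_of_continuousAt hq).congr_of_eventuallyEq hderiv_phi
end

section
/- Let f be a C^1 function on (0,1) with f'(x) < 0 and x·f'(x) = (1-x)·f'(1-x) for all x in (0,1). Define d(x,y) = y·(f(x) - f(y)) + (1-y)·(f(1-x) - f(1-y)) for x, y in (0,1). Then for every fixed y in (0,1), the function x ↦ d(x,y) is strictly decreasing on (0,y) and strictly increasing on (y,1). -/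
/-!
Up to the constant `y f(y) + (1 - y) f(1 - y)`, `x ↦ d(x, y)` is `y f(x) + (1 - y) f(1 - x)`,
whose derivative `y f'(x) - (1 - y) f'(1 - x)` becomes `f'(x) (y - x) / (1 - x)` after the
functional equation is used to eliminate `f'(1 - x)`. Since `f' < 0`, this is negative for
`x < y` and positive for `x > y`.
-/

open Set

theorem strictAntiOn_Ioo_of_hasDerivAt_neg {g g' : ℝ → ℝ} {a b : ℝ}
    (hg : ∀ x ∈ Ioo a b, HasDerivAt g (g' x) x) (hneg : ∀ x ∈ Ioo a b, g' x < 0) :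
    StrictAntiOn g (Ioo a b) :=
  strictAntiOn_of_hasDerivWithinAt_neg (convex_Ioo a b)
    (fun x hx => (hg x hx).continuousAt.continuousWithinAt)
    (fun x hx => (hg x (interior_subset hx)).hasDerivWithinAt)
    (fun x hx => hneg x (interior_subset hx))

theorem strictMonoOn_Ioo_of_hasDerivAt_pos {g g' : ℝ → ℝ} {a b : ℝ}
    (hg : ∀ x ∈ Ioo a b, HasDerivAt g (g' x) x) (hpos : ∀ x ∈ Ioo a b, 0 < g' x) :
    StrictMonoOn g (Ioo a b) :=
  strictMonoOn_of_hasDerivWithinAt_pos (convex_Ioo a b)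
    (fun x hx => (hg x hx).continuousAt.continuousWithinAt)
    (fun x hx => (hg x (interior_subset hx)).hasDerivWithinAt)
    (fun x hx => hpos x (interior_subset hx))

theorem hasDerivAt_mul_add_one_sub_mul_comp_one_sub {f f' : ℝ → ℝ}
    (hderiv : ∀ x ∈ Ioo (0 : ℝ) 1, HasDerivAt f (f' x) x)
    (hfe : ∀ x ∈ Ioo (0 : ℝ) 1, x * f' x = (1 - x) * f' (1 - x)) (y : ℝ) {x : ℝ}
    (hx : x ∈ Ioo (0 : ℝ) 1) :
    HasDerivAt (fun x => y * f x + (1 - y) * f (1 - x)) (f' x * (y - x) / (1 - x)) x := by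
  have hreflect : HasDerivAt (fun x => f (1 - x)) (-f' (1 - x)) x :=
    (hderiv _ (Ioo.one_sub_mem hx)).comp_const_sub 1 x
  refine (((hderiv x hx).const_mul y).add (hreflect.const_mul (1 - y))).congr_deriv ?_
  have hx1 : 1 - x ≠ 0 := by linarith [hx.2]
  rw [eq_div_iff hx1]
  linear_combination (1 - y) * hfe x hx

theorem d_strict_mono_general (f f' : ℝ → ℝ)
    (hderiv : ∀ x ∈ Ioo (0:ℝ) 1, HasDerivAt f (f' x) x)
    (hneg : ∀ x ∈ Ioo (0:ℝ) 1, f' x < 0)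
    (hfe : ∀ x ∈ Ioo (0:ℝ) 1, x * f' x = (1 - x) * f' (1 - x))
    (d : ℝ → ℝ → ℝ)
    (hd : ∀ x ∈ Ioo (0:ℝ) 1, ∀ y ∈ Ioo (0:ℝ) 1,
      d x y = y * (f x - f y) + (1 - y) * (f (1 - x) - f (1 - y)))
    (y : ℝ) (hy : y ∈ Ioo (0:ℝ) 1) :
    StrictAntiOn (fun x => d x y) (Ioo (0:ℝ) y) ∧
    StrictMonoOn (fun x => d x y) (Ioo y (1:ℝ)) := by
  have hderiv_d : ∀ x ∈ Ioo (0 : ℝ) 1,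
      HasDerivAt (fun x => d x y) (f' x * (y - x) / (1 - x)) x := by
    intro x hx
    refine ((hasDerivAt_mul_add_one_sub_mul_comp_one_sub hderiv hfe y hx).sub_const
      (y * f y + (1 - y) * f (1 - y))).congr_of_eventuallyEq ?_
    filter_upwards [isOpen_Ioo.mem_nhds hx] with z hz
    rw [hd z hz y hy]
    ring
  have hleft : Ioo (0 : ℝ) y ⊆ Ioo 0 1 := Ioo_subset_Ioo_right hy.2.le
  have hright : Ioo y (1 : ℝ) ⊆ Ioo 0 1 := Ioo_subset_Ioo_left hy.1.le
  refine ⟨strictAntiOn_Ioo_of_hasDerivAt_neg (fun x hx => hderiv_d x (hleft hx)) ?_,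
    strictMonoOn_Ioo_of_hasDerivAt_pos (fun x hx => hderiv_d x (hright hx)) ?_⟩
  · intro x hx
    have hf' := hneg x (hleft hx)
    exact div_neg_of_neg_of_pos (mul_neg_of_neg_of_pos hf' (by linarith [hx.2]))
      (by linarith [hy.2, hx.2])
  · intro x hx
    have hf' := hneg x (hright hx)
    exact div_pos (mul_pos_of_neg_of_neg hf' (by linarith [hx.1])) (by linarith [hx.2])

theorem d_strict_mono (f f' : ℝ → ℝ)
    (hderiv : ∀ x ∈ Ioo (0:ℝ) 1, HasDerivAt f (f' x) x)
    (hcont : ContinuousOn f' (Ioo (0:ℝ) 1))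
    (hneg : ∀ x ∈ Ioo (0:ℝ) 1, f' x < 0)
    (hfe : ∀ x ∈ Ioo (0:ℝ) 1, x * f' x = (1 - x) * f' (1 - x))
    (d : ℝ → ℝ → ℝ)
    (hd : ∀ x ∈ Ioo (0:ℝ) 1, ∀ y ∈ Ioo (0:ℝ) 1,
      d x y = y * (f x - f y) + (1 - y) * (f (1 - x) - f (1 - y)))
    (y : ℝ) (hy : y ∈ Ioo (0:ℝ) 1) :
    StrictAntiOn (fun x => d x y) (Ioo (0:ℝ) y) ∧
    StrictMonoOn (fun x => d x y) (Ioo y (1:ℝ)) :=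
  d_strict_mono_general f f' hderiv hneg hfe d hd y hy
end

section
/- Let f be a C^1 function on (0,1) with f'(x) < 0 and x·f'(x) = (1-x)·f'(1-x) for all x in (0,1). Define d(x,y) = y·(f(x)-f(y)) + (1-y)·(f(1-x)-f(1-y)). Then d(x,y) ≥ 0 for all x,y in (0,1), with equality if and only if x = y. -/
/-!
Fix `y` and put `g z = y f(z) + (1 - y) f(1 - z)`, so that `d(x, y) = g x - g y`. The symmetry
`(1 - z) f'(1 - z) = z f'(z)` turns `g'(z) = y f'(z) - (1 - y) f'(1 - z)` into
`f'(z) (y - z) / (1 - z)`, which has the sign of `z - y` because `f' < 0`. Hence `y` is the strict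
minimum of `g` on `(0, 1)`.
-/

open Set

theorem apply_lt_apply_of_hasDerivAt_neg_pos {g g' : ℝ → ℝ} {a b x y : ℝ}
    (hg : ∀ z ∈ Ioo a b, HasDerivAt g (g' z) z)
    (hleft : ∀ z ∈ Ioo a y, g' z < 0) (hright : ∀ z ∈ Ioo y b, 0 < g' z)
    (hx : x ∈ Ioo a b) (hy : y ∈ Ioo a b) (hxy : x ≠ y) : g y < g x := by
  have hcont : ContinuousOn g (Ioo a b) := HasDerivAt.continuousOn hg
  rcases hxy.lt_or_gt with hlt | hgt
  · have hsub : Icc x y ⊆ Ioo a b := Icc_subset_Ioo hx.1 hy.2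
    refine strictAntiOn_of_hasDerivWithinAt_neg (convex_Icc x y) (hcont.mono hsub)
      (fun z hz => (hg z (hsub (interior_subset hz))).hasDerivWithinAt) (fun z hz => hleft z ?_)
      (left_mem_Icc.2 hlt.le) (right_mem_Icc.2 hlt.le) hlt
    rw [interior_Icc] at hz
    exact ⟨hx.1.trans hz.1, hz.2⟩
  · have hsub : Icc y x ⊆ Ioo a b := Icc_subset_Ioo hy.1 hx.2
    refine strictMonoOn_of_hasDerivWithinAt_pos (convex_Icc y x) (hcont.mono hsub)
      (fun z hz => (hg z (hsub (interior_subset hz))).hasDerivWithinAt) (fun z hz => hright z ?_)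
      (left_mem_Icc.2 hgt.le) (right_mem_Icc.2 hgt.le) hgt
    rw [interior_Icc] at hz
    exact ⟨hz.1, hz.2.trans hx.2⟩

theorem hasDerivAt_mul_add_mul_comp_one_sub {f f' : ℝ → ℝ}
    (hderiv : ∀ x ∈ Ioo (0:ℝ) 1, HasDerivAt f (f' x) x)
    (hfe : ∀ x ∈ Ioo (0:ℝ) 1, x * f' x = (1 - x) * f' (1 - x)) (y : ℝ) {z : ℝ}
    (hz : z ∈ Ioo (0:ℝ) 1) :
    HasDerivAt (fun w => y * f w + (1 - y) * f (1 - w)) (f' z * (y - z) / (1 - z)) z := by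
  have hz' : 1 - z ∈ Ioo (0:ℝ) 1 := ⟨by linarith [hz.2], by linarith [hz.1]⟩
  have hreflect : HasDerivAt (fun w => f (1 - w)) (f' (1 - z) * (-1)) z :=
    (hderiv _ hz').comp z ((hasDerivAt_id z).const_sub 1)
  refine (((hderiv z hz).const_mul y).add (hreflect.const_mul (1 - y))).congr_deriv ?_
  rw [eq_div_iff (sub_pos.2 hz.2).ne']
  linear_combination (1 - y) * hfe z hz

theorem d_nonneg_eq_iff_general (f f' : ℝ → ℝ)
    (hderiv : ∀ x ∈ Ioo (0:ℝ) 1, HasDerivAt f (f' x) x)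
    (hneg : ∀ x ∈ Ioo (0:ℝ) 1, f' x < 0)
    (hfe : ∀ x ∈ Ioo (0:ℝ) 1, x * f' x = (1 - x) * f' (1 - x)) :
    ∀ x ∈ Ioo (0:ℝ) 1, ∀ y ∈ Ioo (0:ℝ) 1,
      0 ≤ y * (f x - f y) + (1 - y) * (f (1 - x) - f (1 - y)) ∧
      (y * (f x - f y) + (1 - y) * (f (1 - x) - f (1 - y)) = 0 ↔ x = y) := by
  intro x hx y hy
  rcases eq_or_ne x y with rfl | hxy
  · simp
  have hmin : y * f y + (1 - y) * f (1 - y) < y * f x + (1 - y) * f (1 - x) := by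
    refine apply_lt_apply_of_hasDerivAt_neg_pos
      (fun z hz => hasDerivAt_mul_add_mul_comp_one_sub hderiv hfe y hz)
      (fun z hz => ?_) (fun z hz => ?_) hx hy hxy
    · have hz01 : z ∈ Ioo (0:ℝ) 1 := ⟨hz.1, hz.2.trans hy.2⟩
      exact div_neg_of_neg_of_pos (mul_neg_of_neg_of_pos (hneg z hz01) (sub_pos.2 hz.2))
        (sub_pos.2 hz01.2)
    · have hz01 : z ∈ Ioo (0:ℝ) 1 := ⟨hy.1.trans hz.1, hz.2⟩
      exact div_pos (mul_pos_of_neg_of_neg (hneg z hz01) (sub_neg.2 hz.1)) (sub_pos.2 hz01.2)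
  exact ⟨by linarith, ⟨fun h => by linarith, fun h => absurd h hxy⟩⟩

theorem d_nonneg_eq_iff (f f' : ℝ → ℝ)
    (hderiv : ∀ x ∈ Ioo (0:ℝ) 1, HasDerivAt f (f' x) x)
    (hcont : ContinuousOn f' (Ioo (0:ℝ) 1))
    (hneg : ∀ x ∈ Ioo (0:ℝ) 1, f' x < 0)
    (hfe : ∀ x ∈ Ioo (0:ℝ) 1, x * f' x = (1 - x) * f' (1 - x)) :
    ∀ x ∈ Ioo (0:ℝ) 1, ∀ y ∈ Ioo (0:ℝ) 1,
      0 ≤ y * (f x - f y) + (1 - y) * (f (1 - x) - f (1 - y)) ∧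
      (y * (f x - f y) + (1 - y) * (f (1 - x) - f (1 - y)) = 0 ↔ x = y) :=
  d_nonneg_eq_iff_general f f' hderiv hneg hfe
end

section
/- Let X₁, X₂, ... be i.i.d. Bernoulli(θ₀) random variables with θ₀ ∈ (0,1), and let π be a Borel probability measure on (0,1) with π((θ₀-ε, θ₀+ε)) > 0 for all ε > 0. Let f(x) = -log x and let d(x,y) = y·log(y/x) + (1-y)·log((1-y)/(1-x)). With θ̄ₙ = (1/n)∑_{i=1}^n Xᵢ, define the posterior πₙ(A) = ∫_A exp(-n·d(t, θ̄ₙ)) dπ(t) / ∫_{(0,1)} exp(-n·d(t, θ̄ₙ)) dπ(t). Then for every ε > 0, πₙ((θ₀-ε, θ₀+ε)) → 1 almost surely as n → ∞. -/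
/-!
By the strong law of large numbers the sample mean tends to `θ₀` almost surely, so it suffices
to show that the posterior concentrates along any deterministic sequence `yₙ → θ₀`. Pinsker's
inequality `d(t, y) ≥ 2 (y - t)²` bounds the weight `exp (-n d(t, yₙ))` by `exp (-n ε² / 2)` off
`(θ₀ - ε, θ₀ + ε)`, while continuity of `d` at the diagonal bounds it below by `exp (-n ε² / 4)`
on a small interval around `θ₀`, which has positive prior mass. Hence the posterior mass of the
complement is `O(exp (-n ε² / 4))`.
-/

open MeasureTheory Set Filter Topology ProbabilityTheory unitInterval
open Real (exp log)

/-- `bernoulliKL t y` is the Kullback–Leibler divergence of `Ber(y)` from `Ber(t)`. -/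
noncomputable def bernoulliKL (t y : ℝ) : ℝ :=
  y * log (y / t) + (1 - y) * log ((1 - y) / (1 - t))

@[simp] theorem bernoulliKL_self (t : ℝ) : bernoulliKL t t = 0 := by
  simp [bernoulliKL]

theorem measurable_bernoulliKL_left (y : ℝ) : Measurable fun t => bernoulliKL t y := by
  unfold bernoulliKL
  fun_prop

theorem tendsto_bernoulliKL_nhds_diag {θ : ℝ} (hθ : θ ∈ Ioo (0 : ℝ) 1) :
    Tendsto (fun q : ℝ × ℝ => bernoulliKL q.1 q.2) (𝓝 (θ, θ)) (𝓝 0) := by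
  have h0 : θ ≠ 0 := hθ.1.ne'
  have h1 : 1 - θ ≠ 0 := (sub_pos.2 hθ.2).ne'
  rw [← bernoulliKL_self θ]
  unfold bernoulliKL
  apply ContinuousAt.tendsto
  fun_prop (disch := simp [h0, h1, div_self])

theorem isMinOn_of_hasDerivAt_of_sub_mul_nonneg {f f' : ℝ → ℝ} {a b y : ℝ} (hy : y ∈ Ioo a b)
    (hf : ∀ s ∈ Ioo a b, HasDerivAt f (f' s) s) (hsign : ∀ s ∈ Ioo a b, 0 ≤ (s - y) * f' s) :
    IsMinOn f (Ioo a b) y := by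
  have hcont : ContinuousOn f (Ioo a b) := fun s hs => (hf s hs).continuousAt.continuousWithinAt
  have hderiv : ∀ c d, Icc c d ⊆ Ioo a b →
      ∀ s ∈ interior (Icc c d), HasDerivWithinAt f (f' s) (interior (Icc c d)) s :=
    fun c d hcd s hs => (hf s (hcd (interior_subset hs))).hasDerivWithinAt
  refine isMinOn_iff.2 fun t ht => ?_
  rcases le_total y t with hyt | hty
  · have hsub : Icc y t ⊆ Ioo a b := Icc_subset_Ioo hy.1 ht.2
    refine monotoneOn_of_hasDerivWithinAt_nonneg (convex_Icc y t) (hcont.mono hsub)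
      (hderiv y t hsub) (fun s hs => ?_) (left_mem_Icc.2 hyt) (right_mem_Icc.2 hyt) hyt
    rw [interior_Icc] at hs
    exact nonneg_of_mul_nonneg_right (hsign s (hsub (Ioo_subset_Icc_self hs))) (sub_pos.2 hs.1)
  · have hsub : Icc t y ⊆ Ioo a b := Icc_subset_Ioo ht.1 hy.2
    refine antitoneOn_of_hasDerivWithinAt_nonpos (convex_Icc t y) (hcont.mono hsub)
      (hderiv t y hsub) (fun s hs => ?_) (left_mem_Icc.2 hty) (right_mem_Icc.2 hty) hty
    rw [interior_Icc] at hs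
    exact nonpos_of_mul_nonneg_right (hsign s (hsub (Ioo_subset_Icc_self hs))) (sub_neg.2 hs.2)

theorem two_mul_sq_le_bernoulliKL {t y : ℝ} (ht : t ∈ Ioo (0 : ℝ) 1) (hy : y ∈ Ioo (0 : ℝ) 1) :
    2 * (y - t) ^ 2 ≤ bernoulliKL t y := by
  set f : ℝ → ℝ := fun s => -(y * log s) - (1 - y) * log (1 - s) - 2 * (y - s) ^ 2
  have hf : ∀ s ∈ Ioo (0 : ℝ) 1,
      HasDerivAt f (-(y / s) + (1 - y) / (1 - s) + 4 * (y - s)) s := by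
    intro s hs
    have h1s : 1 - s ≠ 0 := (sub_pos.2 hs.2).ne'
    have := (((Real.hasDerivAt_log hs.1.ne').const_mul y).neg.sub
      (((Real.hasDerivAt_log h1s).comp s ((hasDerivAt_id' s).const_sub 1)).const_mul (1 - y))).sub
      (((hasDerivAt_id' s).const_sub y).pow 2 |>.const_mul 2)
    exact this.congr_deriv (by ring)
  have hsign : ∀ s ∈ Ioo (0 : ℝ) 1,
      0 ≤ (s - y) * (-(y / s) + (1 - y) / (1 - s) + 4 * (y - s)) := by
    intro s hs
    have hs0 : s ≠ 0 := hs.1.ne'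
    have hs1 : 0 < 1 - s := sub_pos.2 hs.2
    have hs1' : 1 - s ≠ 0 := hs1.ne'
    have hfactor : (s - y) * (-(y / s) + (1 - y) / (1 - s) + 4 * (y - s))
        = (s - y) ^ 2 * (2 * s - 1) ^ 2 / (s * (1 - s)) := by
      field_simp
      ring
    rw [hfactor]
    exact div_nonneg (by positivity) (mul_pos hs.1 hs1).le
  have hmin : f y ≤ f t := isMinOn_iff.1 (isMinOn_of_hasDerivAt_of_sub_mul_nonneg hy hf hsign) t ht
  simp only [f] at hmin
  rw [bernoulliKL, Real.log_div hy.1.ne' ht.1.ne',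
    Real.log_div (sub_pos.2 hy.2).ne' (sub_pos.2 ht.2).ne']
  nlinarith

section Concentration

variable {α : Type*} [MeasurableSpace α] {μ : Measure α} [IsFiniteMeasure μ]
  {A B : Set α} {a b : ℝ}

theorem integrable_exp_neg_mul_of_nonneg {φ : α → ℝ} (hφ : Measurable φ) {s : ℝ} (hs : 0 ≤ s)
    (h : ∀ᵐ t ∂μ, 0 ≤ φ t) : Integrable (fun t => exp (-s * φ t)) μ := by
  refine Integrable.mono' (integrable_const 1) (by fun_prop) ?_
  filter_upwards [h] with t ht
  rw [Real.norm_of_nonneg (Real.exp_pos _).le, Real.exp_le_one_iff]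
  nlinarith

theorem abs_setIntegral_div_integral_exp_sub_one_le {φ : α → ℝ} (hφ : Measurable φ)
    (hA : MeasurableSet A) (hB : MeasurableSet B) (hμB : μ B ≠ 0) {s : ℝ} (hs : 0 ≤ s)
    (h : ∀ᵐ t ∂μ, 0 ≤ φ t ∧ (t ∈ B → φ t ≤ b) ∧ (t ∉ A → a ≤ φ t)) :
    |(∫ t in A, exp (-s * φ t) ∂μ) / (∫ t, exp (-s * φ t) ∂μ) - 1|
      ≤ μ.real univ / μ.real B * exp (-s * (a - b)) := by
  set g : α → ℝ := fun t => exp (-s * φ t)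
  have hg : Integrable g μ := integrable_exp_neg_mul_of_nonneg hφ hs (h.mono fun _ ht => ht.1)
  have hμB' : 0 < μ.real B := ENNReal.toReal_pos hμB (measure_ne_top μ B)
  have hD : exp (-s * b) * μ.real B ≤ ∫ t, g t ∂μ := calc
    exp (-s * b) * μ.real B = ∫ t in B, exp (-s * b) ∂μ := by
      rw [setIntegral_const, smul_eq_mul, mul_comm]
    _ ≤ ∫ t in B, g t ∂μ := by
      refine setIntegral_mono_on_ae (integrable_const _).integrableOn hg.integrableOn hB ?_
      filter_upwards [h] with t ht htB
      exact Real.exp_le_exp.2 (by nlinarith [ht.2.1 htB])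
    _ ≤ ∫ t, g t ∂μ := setIntegral_le_integral hg (ae_of_all _ fun t => (Real.exp_pos _).le)
  have hN : ∫ t in Aᶜ, g t ∂μ ≤ exp (-s * a) * μ.real univ := calc
    ∫ t in Aᶜ, g t ∂μ ≤ ∫ t in Aᶜ, exp (-s * a) ∂μ := by
      refine setIntegral_mono_on_ae hg.integrableOn (integrable_const _).integrableOn hA.compl ?_
      filter_upwards [h] with t ht htA
      exact Real.exp_le_exp.2 (by nlinarith [ht.2.2 htA])
    _ ≤ exp (-s * a) * μ.real univ := by
      rw [setIntegral_const, smul_eq_mul, mul_comm]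
      gcongr
      · exact measure_ne_top μ _
      · exact subset_univ _
  have hD0 : 0 < ∫ t, g t ∂μ := lt_of_lt_of_le (by positivity) hD
  have hsplit : ∫ t in A, g t ∂μ = ∫ t, g t ∂μ - ∫ t in Aᶜ, g t ∂μ := by
    linarith [integral_add_compl hA hg]
  rw [hsplit, sub_div, div_self hD0.ne', sub_sub_cancel_left, abs_neg, abs_of_nonneg (by positivity)]
  calc (∫ t in Aᶜ, g t ∂μ) / ∫ t, g t ∂μ
      ≤ exp (-s * a) * μ.real univ / (exp (-s * b) * μ.real B) :=
        div_le_div₀ (by positivity) hN (by positivity) hD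
    _ = μ.real univ / μ.real B * exp (-s * (a - b)) := by
        rw [show -s * (a - b) = -s * a - -s * b by ring, Real.exp_sub]
        field_simp

theorem tendsto_setIntegral_div_integral_exp_neg_mul {φ : ℕ → α → ℝ} (hφ : ∀ n, Measurable (φ n))
    (hA : MeasurableSet A) (hB : MeasurableSet B) (hμB : μ B ≠ 0) (hba : b < a)
    (h : ∀ᶠ n in atTop, ∀ᵐ t ∂μ, 0 ≤ φ n t ∧ (t ∈ B → φ n t ≤ b) ∧ (t ∉ A → a ≤ φ n t)) :
    Tendsto (fun n : ℕ => (∫ t in A, exp (-n * φ n t) ∂μ) / ∫ t, exp (-n * φ n t) ∂μ)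
      atTop (𝓝 1) := by
  have hexp : Tendsto (fun n : ℕ => exp (-n * (a - b))) atTop (𝓝 0) := by
    simpa only [neg_mul, Function.comp_def] using Real.tendsto_exp_neg_atTop_nhds_zero.comp
      (tendsto_natCast_atTop_atTop.atTop_mul_const (sub_pos.2 hba))
  rw [tendsto_iff_norm_sub_tendsto_zero]
  refine squeeze_zero' (Eventually.of_forall fun n => norm_nonneg _) ?_
    (by simpa only [mul_zero] using hexp.const_mul (μ.real univ / μ.real B))
  filter_upwards [h] with n hn
  rw [Real.norm_eq_abs]
  exact abs_setIntegral_div_integral_exp_sub_one_le (hφ n) hA hB hμB n.cast_nonneg hn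

end Concentration

/-- The posterior mass of `A` after `n` observations with sample mean `y`. -/
noncomputable def bernoulliPosterior (π : Measure ℝ) (n : ℕ) (y : ℝ) (A : Set ℝ) : ℝ :=
  (∫ t in A, exp (-n * bernoulliKL t y) ∂π) / ∫ t in Ioo (0 : ℝ) 1, exp (-n * bernoulliKL t y) ∂π

theorem tendsto_bernoulliPosterior_Ioo {π : Measure ℝ} [IsFiniteMeasure π]
    (hπ : π (Ioo (0 : ℝ) 1)ᶜ = 0) {θ₀ : ℝ} (hθ₀ : θ₀ ∈ Ioo (0 : ℝ) 1)
    (hcharge : ∀ ε > 0, 0 < π (Ioo (θ₀ - ε) (θ₀ + ε))) {y : ℕ → ℝ}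
    (hy : Tendsto y atTop (𝓝 θ₀)) {ε : ℝ} (hε : 0 < ε) :
    Tendsto (fun n => bernoulliPosterior π n (y n) (Ioo (θ₀ - ε) (θ₀ + ε))) atTop (𝓝 1) := by
  have hI : ∀ᵐ t ∂π, t ∈ Ioo (0 : ℝ) 1 := mem_ae_iff.2 hπ
  unfold bernoulliPosterior
  rw [Measure.restrict_eq_self_of_ae_mem hI]
  obtain ⟨_, hPt, _, hPy, hsmall⟩ := eventually_prod_iff.1 <| nhds_prod_eq (x := θ₀) (y := θ₀) ▸
    (tendsto_bernoulliKL_nhds_diag hθ₀).eventually (gt_mem_nhds (by positivity : 0 < ε ^ 2 / 4))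
  obtain ⟨η, hη, hηt⟩ := Metric.eventually_nhds_iff.1 hPt
  refine tendsto_setIntegral_div_integral_exp_neg_mul (fun n => measurable_bernoulliKL_left (y n))
    measurableSet_Ioo measurableSet_Ioo (hcharge η hη).ne'
    (by linarith [pow_pos hε 2] : ε ^ 2 / 4 < ε ^ 2 / 2) ?_
  filter_upwards [hy.eventually hPy, hy.eventually (Ioo_mem_nhds hθ₀.1 hθ₀.2),
    hy.eventually (Ioo_mem_nhds (by linarith : θ₀ - ε / 2 < θ₀) (by linarith : θ₀ < θ₀ + ε / 2))]
    with n hyP hyI hyε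
  filter_upwards [hI] with t htI
  have hpinsker := two_mul_sq_le_bernoulliKL htI hyI
  refine ⟨by nlinarith, fun htB => (hsmall (hηt ?_) hyP).le, fun htA => ?_⟩
  · rw [Real.dist_eq, abs_sub_lt_iff]
    constructor <;> linarith [htB.1, htB.2]
  · have hfar : ε / 2 ≤ |y n - t| := by
      rw [mem_Ioo, not_and_or, not_lt, not_lt] at htA
      rcases htA with h | h
      · exact le_abs.2 (Or.inl (by linarith [hyε.1]))
      · exact le_abs.2 (Or.inr (by linarith [hyε.2]))
    nlinarith [sq_abs (y n - t), abs_nonneg (y n - t)]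

section Bernoulli

variable {Ω : Type*} [MeasurableSpace Ω] {P : Measure Ω}

theorem hasLaw_bernoulliMeasure [IsProbabilityMeasure P] {E : Type*} [MeasurableSpace E]
    [MeasurableSingletonClass E] {X : Ω → E} {x y : E} (hxy : x ≠ y) (hX : Measurable X)
    (hvals : ∀ ω, X ω = x ∨ X ω = y) {p : I} (hp : P {ω | X ω = x} = ENNReal.ofReal p) :
    HasLaw X Ber(x, y, p) P where
  aemeasurable := hX.aemeasurable
  map_eq := by
    classical
    have hx : MeasurableSet {ω | X ω = x} := hX (measurableSet_singleton x)
    replace hp : P {ω | X ω = x} = toNNReal p :=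
      hp.trans (ENNReal.ofReal_coe_nnreal (p := toNNReal p))
    ext s hs
    rw [Measure.map_apply hX hs, bernoulliMeasure_apply p hs]
    split_ifs with hxs hys hys
    · have : X ⁻¹' s = univ := by
        ext ω; rcases hvals ω with h | h <;> simp [h, hxs, hys]
      simp [this]
    · have : X ⁻¹' s = {ω | X ω = x} := by
        ext ω; rcases hvals ω with h | h <;> simp [h, hxs, hys, hxy.symm]
      simp [this, hp]
    · have : X ⁻¹' s = {ω | X ω = x}ᶜ := by
        ext ω; rcases hvals ω with h | h <;> simp [h, hxs, hys, hxy.symm]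
      rw [this, prob_compl_eq_one_sub hx, hp, ← ENNReal.coe_one, ← toNNReal_add_toNNReal_symm p,
        ENNReal.coe_add, ENNReal.add_sub_cancel_left ENNReal.coe_ne_top]
    · have : X ⁻¹' s = ∅ := by
        ext ω; rcases hvals ω with h | h <;> simp [h, hxs, hys]
      simp [this]

theorem ae_tendsto_average_of_hasLaw_bernoulli {X : ℕ → Ω → ℝ} (hindep : iIndepFun X P) {p : I}
    (hX : ∀ i, HasLaw (X i) Ber(1, 0, p) P) :
    ∀ᵐ ω ∂P, Tendsto (fun n : ℕ => (∑ i ∈ Finset.range n, X i ω) / n) atTop (𝓝 (p : ℝ)) := by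
  have hint : Integrable (X 0) P :=
    (integrable_map_measure aestronglyMeasurable_id (hX 0).aemeasurable).1
      ((hX 0).map_eq ▸ integrable_bernoulliMeasure 1 0 p id)
  have hmean : P[X 0] = (p : ℝ) := by
    simp [(hX 0).integral_eq, integral_bernoulliMeasure]
  simpa [hmean] using strong_law_ae_real X hint (fun i j hij => hindep.indepFun hij)
    fun i => (hX i).identDistrib (hX 0)

end Bernoulli

theorem bayes_consistency_bernoulli
    {Ω : Type*} [MeasurableSpace Ω] (P : Measure Ω) [IsProbabilityMeasure P]
    (θ₀ : ℝ) (hθ₀ : θ₀ ∈ Ioo (0:ℝ) 1)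
    (X : ℕ → Ω → ℝ) (hmeas : ∀ i, Measurable (X i))
    (hindep : ProbabilityTheory.iIndepFun X P)
    (hvals : ∀ i ω, X i ω = 0 ∨ X i ω = 1)
    (hlaw : ∀ i, P {ω | X i ω = 1} = ENNReal.ofReal θ₀)
    (π : Measure ℝ) [IsProbabilityMeasure π] (hπsupp : π (Set.Ioo (0:ℝ) 1)ᶜ = 0)
    (hcharge : ∀ ε > 0, 0 < π (Set.Ioo (θ₀ - ε) (θ₀ + ε)))
    (d : ℝ → ℝ → ℝ)
    (hd : ∀ x y, d x y = y * Real.log (y / x) + (1 - y) * Real.log ((1 - y) / (1 - x)))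
    (mean : ℕ → Ω → ℝ)
    (hmean : ∀ n ω, mean n ω = (∑ i ∈ Finset.range n, X i ω) / n)
    (post : ℕ → Ω → Set ℝ → ℝ)
    (hpost : ∀ n ω A, post n ω A =
      (∫ t in A, Real.exp (-(n : ℝ) * d t (mean n ω)) ∂π) /
      (∫ t in Set.Ioo (0:ℝ) 1, Real.exp (-(n : ℝ) * d t (mean n ω)) ∂π)) :
    ∀ ε > 0, ∀ᵐ ω ∂P,
      Tendsto (fun n => post n ω (Set.Ioo (θ₀ - ε) (θ₀ + ε))) atTop (nhds 1) := by
  intro ε hε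
  obtain rfl : d = bernoulliKL := funext₂ hd
  let p : I := ⟨θ₀, hθ₀.1.le, hθ₀.2.le⟩
  have hX : ∀ i, HasLaw (X i) Ber(1, 0, p) P := fun i =>
    hasLaw_bernoulliMeasure one_ne_zero (hmeas i) (fun ω => (hvals i ω).symm) (hlaw i)
  filter_upwards [ae_tendsto_average_of_hasLaw_bernoulli hindep hX] with ω hω
  simp only [hpost]
  exact tendsto_bernoulliPosterior_Ioo hπsupp hθ₀ hcharge (hω.congr fun n => (hmean n ω).symm) hε
end

section
/- Let p : (0,1) → [0,∞) be continuous and integrable, let θ₀ ∈ (0,1) with p(θ₀) > 0, and let d(t,θ₀) = θ₀·log(θ₀/t) + (1-θ₀)·log((1-θ₀)/(1-t)). Then as n → ∞, ∫_{(0,1)} p(t)·e^{-n·d(t,θ₀)} dt ∼ √(2π)·p(θ₀) / √(n·d''(θ₀)), where d''(θ₀) = 1/(θ₀(1-θ₀)) is the second derivative of t ↦ d(t,θ₀) at θ₀. -/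
/-!
Laplace's method. The divergence `d` vanishes at its critical point `θ₀`, where `d'' θ₀ = c`, so
Taylor's theorem gives `d t = (c / 2) (t - θ₀)² (1 + o(1))`. Given `η > 0`, on a small ball around
`θ₀` the integrand `p e^{-n d}` lies between `(p θ₀ - η) e^{-n (1 + η) (c / 2) (t - θ₀)²}` and
`(p θ₀ + η) e^{-n (1 - η) (c / 2) (t - θ₀)²}`, and `√(n c)` times the integral of such a Gaussian
over the ball tends to `√(2π / (1 ± η))`. Outside the ball, monotonicity of `d` on each side of
`θ₀` gives `d ≥ m > 0`, so that part is `O(e^{-n m}) = o(n^{-1/2})`. Letting `n → ∞` and then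
`η → 0` gives `√(n c) ∫ p e^{-n d} → √(2π) p θ₀`.
-/

open Set Filter MeasureTheory Real Topology Metric Asymptotics

theorem eventually_lt_of_forall_tendsto_le {α β γ : Type*} [LinearOrder β] [TopologicalSpace β]
    [OrderTopology β] {f : Filter α} {l : Filter γ} [l.NeBot] {a : α → β} {L : γ → β} {ℓ x : β}
    (hL : Tendsto L l (𝓝 ℓ))
    (h : ∀ᶠ η in l, ∃ lo : α → β, Tendsto lo f (𝓝 (L η)) ∧ lo ≤ᶠ[f] a) (hx : x < ℓ) :
    ∀ᶠ n in f, x < a n := by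
  obtain ⟨η, hxη, lo, hlo, hloa⟩ := ((hL.eventually (lt_mem_nhds hx)).and h).exists
  filter_upwards [hlo.eventually (lt_mem_nhds hxη), hloa] with n h₁ h₂
  exact h₁.trans_le h₂

theorem eventually_gt_of_forall_tendsto_ge {α β γ : Type*} [LinearOrder β] [TopologicalSpace β]
    [OrderTopology β] {f : Filter α} {l : Filter γ} [l.NeBot] {a : α → β} {U : γ → β} {ℓ x : β}
    (hU : Tendsto U l (𝓝 ℓ))
    (h : ∀ᶠ η in l, ∃ hi : α → β, Tendsto hi f (𝓝 (U η)) ∧ a ≤ᶠ[f] hi) (hx : ℓ < x) :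
    ∀ᶠ n in f, a n < x :=
  eventually_lt_of_forall_tendsto_le (β := βᵒᵈ) hU h hx

theorem integral_exp_neg_mul_sq_sub (b θ : ℝ) :
    ∫ t, exp (-b * (t - θ) ^ 2) = √(π / b) := by
  rw [integral_sub_right_eq_self (fun t ↦ exp (-b * t ^ 2)) θ, integral_gaussian]

theorem integrableOn_ball_exp_neg_mul_sq (b θ δ : ℝ) :
    IntegrableOn (fun t ↦ exp (-b * (t - θ) ^ 2)) (ball θ δ) :=
  ((by fun_prop : Continuous fun t ↦ exp (-b * (t - θ) ^ 2)).locallyIntegrable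
    |>.integrableOn_isCompact (isCompact_closedBall θ δ)).mono_set ball_subset_closedBall

theorem setIntegral_compl_ball_exp_neg_mul_sq_le {b : ℝ} (hb : 0 < b) (θ : ℝ) {δ : ℝ}
    (hδ : 0 ≤ δ) :
    ∫ t in (ball θ δ)ᶜ, exp (-b * (t - θ) ^ 2) ≤ exp (-(b * δ ^ 2 / 2)) * √(π / (b / 2)) := by
  have hint : Integrable fun t ↦ exp (-(b / 2) * (t - θ) ^ 2) :=
    (integrable_exp_neg_mul_sq (half_pos hb)).comp_sub_right θ
  calc ∫ t in (ball θ δ)ᶜ, exp (-b * (t - θ) ^ 2)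
      ≤ ∫ t in (ball θ δ)ᶜ, exp (-(b * δ ^ 2 / 2)) * exp (-(b / 2) * (t - θ) ^ 2) := by
        refine setIntegral_mono_on ((integrable_exp_neg_mul_sq hb).comp_sub_right θ).integrableOn
          (hint.const_mul _).integrableOn measurableSet_ball.compl fun t ht ↦ ?_
        have : δ ^ 2 ≤ (t - θ) ^ 2 := by
          rw [mem_compl_iff, mem_ball, dist_eq, not_lt] at ht
          simpa using pow_le_pow_left₀ hδ ht 2
        rw [← exp_add]
        gcongr
        nlinarith
    _ ≤ ∫ t, exp (-(b * δ ^ 2 / 2)) * exp (-(b / 2) * (t - θ) ^ 2) :=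
        setIntegral_le_integral (hint.const_mul _) (.of_forall fun _ ↦ by positivity)
    _ = exp (-(b * δ ^ 2 / 2)) * √(π / (b / 2)) := by
        rw [integral_const_mul, integral_exp_neg_mul_sq_sub]

theorem tendsto_sqrt_mul_setIntegral_ball_exp_neg_mul_sq (θ : ℝ) {δ : ℝ} (hδ : 0 < δ) :
    Tendsto (fun b ↦ √b * ∫ t in ball θ δ, exp (-b * (t - θ) ^ 2)) atTop (𝓝 √π) := by
  have hlower : Tendsto (fun b ↦ √π - exp (-(b * δ ^ 2 / 2)) * √(2 * π)) atTop (𝓝 √π) := by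
    have : Tendsto (fun b ↦ b * δ ^ 2 / 2) atTop atTop :=
      (tendsto_id.atTop_mul_const (by positivity)).atTop_div_const two_pos
    simpa using tendsto_const_nhds.sub
      ((tendsto_exp_neg_atTop_nhds_zero.comp this).mul_const √(2 * π))
  refine tendsto_of_tendsto_of_tendsto_of_le_of_le' hlower tendsto_const_nhds ?_ ?_ <;>
    filter_upwards [eventually_gt_atTop 0] with b hb
  · have hsplit := integral_add_compl (μ := volume) (measurableSet_ball (x := θ) (ε := δ))
      ((integrable_exp_neg_mul_sq hb).comp_sub_right θ)
    have hcompl := setIntegral_compl_ball_exp_neg_mul_sq_le hb θ hδ.le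
    rw [integral_exp_neg_mul_sq_sub] at hsplit
    have h₁ : √b * √(π / b) = √π := by
      rw [← sqrt_mul hb.le, mul_div_cancel₀ _ hb.ne']
    have h₂ : √b * √(π / (b / 2)) = √(2 * π) := by
      rw [← sqrt_mul hb.le]; congr 1; field_simp
    calc √π - exp (-(b * δ ^ 2 / 2)) * √(2 * π)
        = √b * (√(π / b) - exp (-(b * δ ^ 2 / 2)) * √(π / (b / 2))) := by
          rw [mul_sub, h₁, mul_left_comm, h₂]
      _ ≤ √b * ∫ t in ball θ δ, exp (-b * (t - θ) ^ 2) := by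
          gcongr; linarith
  · calc √b * ∫ t in ball θ δ, exp (-b * (t - θ) ^ 2)
        ≤ √b * √(π / b) := by
          gcongr
          rw [← integral_exp_neg_mul_sq_sub]
          exact setIntegral_le_integral ((integrable_exp_neg_mul_sq hb).comp_sub_right θ)
            (.of_forall fun _ ↦ by positivity)
      _ = √π := by rw [← sqrt_mul hb.le, mul_div_cancel₀ _ hb.ne']

theorem tendsto_sqrt_natCast_mul_setIntegral_ball_exp_neg_mul_sq (θ : ℝ) {a c δ : ℝ}
    (ha : 0 < a) (hc : 0 < c) (hδ : 0 < δ) :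
    Tendsto (fun n : ℕ ↦ √(n * c) * ∫ t in ball θ δ, exp (-(n * (a * c)) * (t - θ) ^ 2))
      atTop (𝓝 √(π / a)) := by
  have hb : Tendsto (fun n : ℕ ↦ (n : ℝ) * (a * c)) atTop atTop :=
    tendsto_natCast_atTop_atTop.atTop_mul_const (mul_pos ha hc)
  rw [sqrt_div' _ ha.le]
  refine ((tendsto_sqrt_mul_setIntegral_ball_exp_neg_mul_sq θ hδ).comp hb).div_const √a
    |>.congr fun n ↦ ?_
  have h : √((n : ℝ) * (a * c)) = √a * √(n * c) := by rw [mul_left_comm, sqrt_mul ha.le]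
  rw [Function.comp_apply, h, mul_assoc, mul_div_cancel_left₀ _ (sqrt_pos.2 ha).ne']

theorem tendsto_sqrt_natCast_mul_exp_neg_mul {c m : ℝ} (hc : 0 ≤ c) (hm : 0 < m) :
    Tendsto (fun n : ℕ ↦ √(n * c) * exp (-n * m)) atTop (𝓝 0) := by
  have := ((tendsto_rpow_mul_exp_neg_mul_atTop_nhds_zero (1 / 2) m hm).comp
    tendsto_natCast_atTop_atTop).const_mul √c
  rw [mul_zero] at this
  refine this.congr fun n ↦ ?_
  rw [Function.comp_apply, ← sqrt_eq_rpow, sqrt_mul' _ hc, neg_mul, neg_mul, mul_comm (n : ℝ) m]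
  ring

section Laplace

variable {s : Set ℝ} {p d : ℝ → ℝ} {θ c : ℝ}

theorem integrableOn_mul_exp_neg_mul {n : ℝ} (hs : MeasurableSet s) (hp : IntegrableOn p s)
    (hd_meas : Measurable d) (hd_nonneg : ∀ t ∈ s, 0 ≤ d t)
    (hn : 0 ≤ n) :
    IntegrableOn (fun t ↦ p t * exp (-n * d t)) s := by
  refine hp.mul_bdd (c := 1) (by fun_prop) ((ae_restrict_iff' hs).2 (.of_forall fun t ht ↦ ?_))
  rw [norm_of_nonneg (exp_pos _).le, exp_le_one_iff]
  nlinarith [hd_nonneg t ht]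

theorem integral_mul_exp_neg_mul_le {δ m P k n : ℝ}
    (hs : MeasurableSet s) (hp : IntegrableOn p s) (hp_nonneg : ∀ t ∈ s, 0 ≤ p t)
    (hd_meas : Measurable d) (hd_nonneg : ∀ t ∈ s, 0 ≤ d t) (hn : 0 ≤ n) (hP : 0 ≤ P)
    (hnear : ∀ t ∈ s ∩ ball θ δ, p t ≤ P ∧ k * (t - θ) ^ 2 ≤ d t)
    (hfar : ∀ t ∈ s, δ ≤ |t - θ| → m ≤ d t) :
    ∫ t in s, p t * exp (-n * d t) ≤
      P * (∫ t in ball θ δ, exp (-(n * k) * (t - θ) ^ 2)) + exp (-n * m) * ∫ t in s, p t := by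
  have hint := integrableOn_mul_exp_neg_mul hs hp hd_meas hd_nonneg hn
  have hgauss : IntegrableOn (fun t ↦ P * exp (-(n * k) * (t - θ) ^ 2)) (ball θ δ) :=
    (integrableOn_ball_exp_neg_mul_sq (n * k) θ δ).const_mul P
  rw [← integral_inter_add_sdiff measurableSet_ball hint]
  refine add_le_add ?_ ?_
  · calc ∫ t in s ∩ ball θ δ, p t * exp (-n * d t)
        ≤ ∫ t in s ∩ ball θ δ, P * exp (-(n * k) * (t - θ) ^ 2) := by
          refine setIntegral_mono_on (hint.mono_set inter_subset_left)
            (hgauss.mono_set inter_subset_right) (hs.inter measurableSet_ball) fun t ht ↦ ?_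
          obtain ⟨hpP, hkd⟩ := hnear t ht
          exact mul_le_mul hpP (exp_le_exp.2 (by nlinarith [mul_le_mul_of_nonneg_left hkd hn]))
            (exp_pos _).le hP
      _ ≤ ∫ t in ball θ δ, P * exp (-(n * k) * (t - θ) ^ 2) :=
          setIntegral_mono_set hgauss (.of_forall fun _ ↦ by positivity)
            inter_subset_right.eventuallyLE
      _ = P * ∫ t in ball θ δ, exp (-(n * k) * (t - θ) ^ 2) := integral_const_mul _ _
  · calc ∫ t in s \ ball θ δ, p t * exp (-n * d t)
        ≤ ∫ t in s \ ball θ δ, exp (-n * m) * p t := by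
          refine setIntegral_mono_on (hint.mono_set sdiff_subset)
            ((hp.mono_set sdiff_subset).const_mul _) (hs.diff measurableSet_ball)
            fun t ht ↦ ?_
          have hm : m ≤ d t := hfar t ht.1 (by simpa [dist_eq] using ht.2)
          rw [mul_comm]
          exact mul_le_mul_of_nonneg_right
            (exp_le_exp.2 (by nlinarith [mul_le_mul_of_nonneg_left hm hn])) (hp_nonneg t ht.1)
      _ ≤ ∫ t in s, exp (-n * m) * p t :=
          setIntegral_mono_set (hp.const_mul _) ((ae_restrict_iff' hs).2
            (.of_forall fun t ht ↦ mul_nonneg (exp_pos _).le (hp_nonneg t ht)))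
            sdiff_subset.eventuallyLE
      _ = exp (-n * m) * ∫ t in s, p t := integral_const_mul _ _

theorem le_integral_mul_exp_neg_mul {δ P k n : ℝ}
    (hs : MeasurableSet s) (hp : IntegrableOn p s) (hp_nonneg : ∀ t ∈ s, 0 ≤ p t)
    (hd_meas : Measurable d) (hd_nonneg : ∀ t ∈ s, 0 ≤ d t) (hn : 0 ≤ n)
    (hball : ball θ δ ⊆ s) (hnear : ∀ t ∈ ball θ δ, P ≤ p t ∧ d t ≤ k * (t - θ) ^ 2) :
    P * (∫ t in ball θ δ, exp (-(n * k) * (t - θ) ^ 2)) ≤ ∫ t in s, p t * exp (-n * d t) := by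
  have hint := integrableOn_mul_exp_neg_mul hs hp hd_meas hd_nonneg hn
  rw [← integral_const_mul]
  calc ∫ t in ball θ δ, P * exp (-(n * k) * (t - θ) ^ 2)
      ≤ ∫ t in ball θ δ, p t * exp (-n * d t) := by
        refine setIntegral_mono_on ((integrableOn_ball_exp_neg_mul_sq (n * k) θ δ).const_mul P)
          (hint.mono_set hball) measurableSet_ball fun t ht ↦ ?_
        obtain ⟨hPp, hdk⟩ := hnear t ht
        calc P * exp (-(n * k) * (t - θ) ^ 2) ≤ p t * exp (-(n * k) * (t - θ) ^ 2) := by gcongr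
          _ ≤ p t * exp (-n * d t) := mul_le_mul_of_nonneg_left
            (exp_le_exp.2 (by nlinarith [mul_le_mul_of_nonneg_left hdk hn]))
            (hp_nonneg t (hball ht))
    _ ≤ ∫ t in s, p t * exp (-n * d t) :=
        setIntegral_mono_set hint ((ae_restrict_iff' hs).2 (.of_forall fun t ht ↦
          mul_nonneg (hp_nonneg t ht) (exp_pos _).le)) hball.eventuallyLE

theorem eventually_mul_sq_le_and_le_mul_sq_of_isLittleO {η : ℝ} (hc : 0 < c) (hη : 0 < η)
    (hd : (fun t ↦ d t - c / 2 * (t - θ) ^ 2) =o[𝓝 θ] fun t ↦ (t - θ) ^ 2) :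
    ∀ᶠ t in 𝓝 θ, (1 - η) / 2 * c * (t - θ) ^ 2 ≤ d t ∧ d t ≤ (1 + η) / 2 * c * (t - θ) ^ 2 := by
  filter_upwards [hd.def (by positivity : 0 < η * c / 2)] with t ht
  rw [norm_of_nonneg (sq_nonneg _), Real.norm_eq_abs, abs_le] at ht
  constructor <;> linarith [ht.1, ht.2]

theorem eventually_lt_sqrt_mul_integral_mul_exp_neg_mul (hs : s ∈ 𝓝 θ)
    (hs_meas : MeasurableSet s) (hp_int : IntegrableOn p s) (hp_nonneg : ∀ t ∈ s, 0 ≤ p t)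
    (hp : ContinuousAt p θ) (hd_meas : Measurable d) (hd_nonneg : ∀ t ∈ s, 0 ≤ d t)
    (hc : 0 < c) (hd : (fun t ↦ d t - c / 2 * (t - θ) ^ 2) =o[𝓝 θ] fun t ↦ (t - θ) ^ 2)
    {x : ℝ} (hx : x < √(2 * π) * p θ) :
    ∀ᶠ n : ℕ in atTop, x < √(n * c) * ∫ t in s, p t * exp (-n * d t) := by
  refine eventually_lt_of_forall_tendsto_le (l := 𝓝[>] 0)
    (L := fun η ↦ (p θ - η) * √(π / ((1 + η) / 2))) ?_ ?_ hx
  · have : ContinuousAt (fun η : ℝ ↦ (p θ - η) * √(π / ((1 + η) / 2))) 0 := by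
      fun_prop (disch := norm_num)
    convert this.tendsto.mono_left nhdsWithin_le_nhds using 2
    norm_num [mul_comm]
  filter_upwards [self_mem_nhdsWithin] with η (hη : 0 < η)
  obtain ⟨δ, hδ, hball⟩ := Metric.eventually_nhds_iff_ball.1 (((eventually_mem_set.2 hs).and
    (Metric.tendsto_nhds.1 hp η hη)).and (eventually_mul_sq_le_and_le_mul_sq_of_isLittleO hc hη hd))
  refine ⟨fun n : ℕ ↦ (p θ - η) *
    (√(n * c) * ∫ t in ball θ δ, exp (-(n * ((1 + η) / 2 * c)) * (t - θ) ^ 2)),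
    (tendsto_sqrt_natCast_mul_setIntegral_ball_exp_neg_mul_sq θ (a := (1 + η) / 2)
      (by positivity) hc hδ).const_mul (p θ - η), .of_forall fun n ↦ ?_⟩
  dsimp only
  rw [mul_left_comm]
  refine mul_le_mul_of_nonneg_left (le_integral_mul_exp_neg_mul hs_meas hp_int hp_nonneg hd_meas
    hd_nonneg n.cast_nonneg (fun t ht ↦ (hball t ht).1.1) fun t ht ↦ ?_) (sqrt_nonneg _)
  obtain ⟨⟨-, hpt⟩, -, hdt⟩ := hball t ht
  rw [dist_eq, abs_lt] at hpt
  exact ⟨by linarith, hdt⟩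

theorem eventually_sqrt_mul_integral_mul_exp_neg_mul_lt (hs : s ∈ 𝓝 θ)
    (hs_meas : MeasurableSet s) (hp_int : IntegrableOn p s) (hp_nonneg : ∀ t ∈ s, 0 ≤ p t)
    (hp : ContinuousAt p θ) (hd_meas : Measurable d) (hd_nonneg : ∀ t ∈ s, 0 ≤ d t)
    (hc : 0 < c) (hd : (fun t ↦ d t - c / 2 * (t - θ) ^ 2) =o[𝓝 θ] fun t ↦ (t - θ) ^ 2)
    (hsep : ∀ δ > 0, ∃ m > 0, ∀ t ∈ s, δ ≤ |t - θ| → m ≤ d t)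
    {x : ℝ} (hx : √(2 * π) * p θ < x) :
    ∀ᶠ n : ℕ in atTop, √(n * c) * ∫ t in s, p t * exp (-n * d t) < x := by
  refine eventually_gt_of_forall_tendsto_ge (l := 𝓝[>] 0)
    (U := fun η ↦ (p θ + η) * √(π / ((1 - η) / 2))) ?_ ?_ hx
  · have : ContinuousAt (fun η : ℝ ↦ (p θ + η) * √(π / ((1 - η) / 2))) 0 := by
      fun_prop (disch := norm_num)
    convert this.tendsto.mono_left nhdsWithin_le_nhds using 2
    norm_num [mul_comm]
  filter_upwards [Ioo_mem_nhdsGT one_pos] with η ⟨hη, hη1⟩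
  obtain ⟨δ, hδ, hball⟩ := Metric.eventually_nhds_iff_ball.1 (((eventually_mem_set.2 hs).and
    (Metric.tendsto_nhds.1 hp η hη)).and (eventually_mul_sq_le_and_le_mul_sq_of_isLittleO hc hη hd))
  obtain ⟨m, hm, hfar⟩ := hsep δ hδ
  have hgauss := (tendsto_sqrt_natCast_mul_setIntegral_ball_exp_neg_mul_sq θ
    (a := (1 - η) / 2) (by linarith) hc hδ).const_mul (p θ + η)
  have htail := (tendsto_sqrt_natCast_mul_exp_neg_mul hc.le hm).mul_const (∫ t in s, p t)
  rw [zero_mul] at htail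
  refine ⟨_, by simpa only [add_zero] using hgauss.add htail, .of_forall fun n ↦ ?_⟩
  calc √(n * c) * ∫ t in s, p t * exp (-n * d t)
      ≤ √(n * c) * ((p θ + η) * (∫ t in ball θ δ, exp (-(n * ((1 - η) / 2 * c)) * (t - θ) ^ 2))
          + exp (-n * m) * ∫ t in s, p t) := by
        refine mul_le_mul_of_nonneg_left (integral_mul_exp_neg_mul_le hs_meas hp_int hp_nonneg
          hd_meas hd_nonneg n.cast_nonneg (by linarith [hp_nonneg θ (mem_of_mem_nhds hs)])
          (fun t ht ↦ ?_) hfar) (sqrt_nonneg _)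
        obtain ⟨⟨-, hpt⟩, hdt, -⟩ := hball t ht.2
        rw [dist_eq, abs_lt] at hpt
        exact ⟨by linarith, hdt⟩
    _ = _ := by ring

theorem tendsto_sqrt_mul_integral_mul_exp_neg_mul (hs : s ∈ 𝓝 θ)
    (hs_meas : MeasurableSet s) (hp_int : IntegrableOn p s) (hp_nonneg : ∀ t ∈ s, 0 ≤ p t)
    (hp : ContinuousAt p θ) (hd_meas : Measurable d)
    (hc : 0 < c) (hd : (fun t ↦ d t - c / 2 * (t - θ) ^ 2) =o[𝓝 θ] fun t ↦ (t - θ) ^ 2)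
    (hsep : ∀ δ > 0, ∃ m > 0, ∀ t ∈ s, δ ≤ |t - θ| → m ≤ d t) :
    Tendsto (fun n : ℕ ↦ √(n * c) * ∫ t in s, p t * exp (-n * d t)) atTop
      (𝓝 (√(2 * π) * p θ)) := by
  have hd_nonneg : ∀ t ∈ s, 0 ≤ d t := by
    intro t ht
    rcases eq_or_ne t θ with rfl | hne
    -- the little-o bound at `t = θ` forces `d θ = 0`
    · exact (by simpa using (hd.def one_pos).self_of_nhds : d t = 0).ge
    · obtain ⟨m, hm, hfar⟩ := hsep |t - θ| (abs_pos.2 (sub_ne_zero.2 hne))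
      exact hm.le.trans (hfar t ht le_rfl)
  exact tendsto_order.2
    ⟨fun x hx ↦ eventually_lt_sqrt_mul_integral_mul_exp_neg_mul hs hs_meas hp_int hp_nonneg hp
      hd_meas hd_nonneg hc hd hx,
    fun x hx ↦ eventually_sqrt_mul_integral_mul_exp_neg_mul_lt hs hs_meas hp_int hp_nonneg hp
      hd_meas hd_nonneg hc hd hsep hx⟩

end Laplace

theorem isLittleO_sub_sub_half_mul_sq {f f' : ℝ → ℝ} {x₀ c : ℝ}
    (hf : ∀ᶠ x in 𝓝 x₀, HasDerivAt f (f' x) x) (hf' : HasDerivAt f' c x₀) (hcrit : f' x₀ = 0) :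
    (fun x ↦ f x - f x₀ - c / 2 * (x - x₀) ^ 2) =o[𝓝 x₀] fun x ↦ (x - x₀) ^ 2 := by
  obtain ⟨ε, hε, hball⟩ := Metric.eventually_nhds_iff_ball.1 hf
  have hquad (x : ℝ) : HasDerivAt (fun x ↦ c / 2 * (x - x₀) ^ 2) (c * (x - x₀)) x := by
    refine ((hasDerivAt_id' x |>.sub_const x₀).fun_pow 2).const_mul (c / 2) |>.congr_deriv ?_
    ring
  have hrem : (fun x ↦ f' x - c * (x - x₀)) =o[𝓝[ball x₀ ε] x₀] fun x ↦ (x - x₀) ^ 1 := by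
    have := (hasDerivAt_iff_isLittleO.1 hf').mono (nhdsWithin_le_nhds (s := ball x₀ ε))
    simpa [hcrit, mul_comm] using this
  have := (convex_ball x₀ ε).isLittleO_pow_succ_real (mem_ball_self hε)
    (fun x hx ↦ ((hball x hx).sub (hquad x)).hasDerivWithinAt) hrem
  rw [nhdsWithin_eq_nhds.2 (ball_mem_nhds x₀ hε)] at this
  simpa [sub_right_comm] using this

theorem exists_gt_forall_le_of_strictAntiOn_of_strictMonoOn {d : ℝ → ℝ} {a b θ δ : ℝ}
    (hθ : θ ∈ Ioo a b) (hδ : 0 < δ) (hanti : StrictAntiOn d (Ioc a θ))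
    (hmono : StrictMonoOn d (Ico θ b)) :
    ∃ m > d θ, ∀ t ∈ Ioo a b, δ ≤ |t - θ| → m ≤ d t := by
  set r := min δ (min (θ - a) (b - θ) / 2)
  have hr : 0 < r := lt_min hδ (half_pos (lt_min (sub_pos.2 hθ.1) (sub_pos.2 hθ.2)))
  have hrδ : r ≤ δ := min_le_left _ _
  have hr₁ : r ≤ min (θ - a) (b - θ) / 2 := min_le_right _ _
  have hr₂ := min_le_left (θ - a) (b - θ)
  have hr₃ := min_le_right (θ - a) (b - θ)
  have hleft : θ - r ∈ Ioc a θ := ⟨by linarith, by linarith⟩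
  have hright : θ + r ∈ Ico θ b := ⟨by linarith, by linarith⟩
  refine ⟨min (d (θ - r)) (d (θ + r)), lt_min (hanti hleft ⟨hθ.1, le_rfl⟩ (by linarith))
    (hmono ⟨le_rfl, hθ.2⟩ hright (by linarith)), fun t ht htθ ↦ ?_⟩
  rcases le_abs'.1 htθ with h | h
  · exact (min_le_left _ _).trans (hanti.antitoneOn ⟨ht.1, by linarith⟩ hleft (by linarith))
  · exact (min_le_right _ _).trans (hmono.monotoneOn hright ⟨by linarith, ht.2⟩ (by linarith))

noncomputable def klBernoulli (θ t : ℝ) : ℝ := θ * log (θ / t) + (1 - θ) * log ((1 - θ) / (1 - t))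

section klBernoulli

variable {θ : ℝ}

theorem klBernoulli_self (hθ : θ ∈ Ioo 0 1) : klBernoulli θ θ = 0 := by
  simp [klBernoulli, div_self hθ.1.ne', div_self (sub_pos.2 hθ.2).ne']

theorem measurable_klBernoulli : Measurable (klBernoulli θ) := by
  unfold klBernoulli
  fun_prop

theorem hasDerivAt_klBernoulli (hθ : θ ∈ Ioo 0 1) {t : ℝ} (ht : t ∈ Ioo 0 1) :
    HasDerivAt (klBernoulli θ) ((t - θ) / (t * (1 - t))) t := by
  have ht₀ : t ≠ 0 := ht.1.ne'
  have hθ₀ : θ ≠ 0 := hθ.1.ne'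
  have ht₁ : 1 - t ≠ 0 := (sub_pos.2 ht.2).ne'
  have hθ₁ : 1 - θ ≠ 0 := (sub_pos.2 hθ.2).ne'
  have h₁ := (((hasDerivAt_const t θ).fun_div (hasDerivAt_id' t) ht₀).log
    (div_ne_zero hθ₀ ht₀)).const_mul θ
  have h₂ := (((hasDerivAt_const t (1 - θ)).fun_div ((hasDerivAt_id' t).const_sub 1) ht₁).log
    (div_ne_zero hθ₁ ht₁)).const_mul (1 - θ)
  refine (h₁.add h₂).congr_deriv ?_
  field_simp
  ring

theorem strictAntiOn_klBernoulli (hθ : θ ∈ Ioo 0 1) : StrictAntiOn (klBernoulli θ) (Ioc 0 θ) := by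
  have hsub : Ioc 0 θ ⊆ Ioo 0 1 := fun t ht ↦ ⟨ht.1, ht.2.trans_lt hθ.2⟩
  refine strictAntiOn_of_deriv_neg (convex_Ioc 0 θ)
    (fun t ht ↦ (hasDerivAt_klBernoulli hθ (hsub ht)).continuousAt.continuousWithinAt)
    fun t ht ↦ ?_
  rw [interior_Ioc] at ht
  have ht₁ := hsub (Ioo_subset_Ioc_self ht)
  rw [(hasDerivAt_klBernoulli hθ ht₁).deriv]
  exact div_neg_of_neg_of_pos (sub_neg.2 ht.2) (mul_pos ht₁.1 (sub_pos.2 ht₁.2))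

theorem strictMonoOn_klBernoulli (hθ : θ ∈ Ioo 0 1) : StrictMonoOn (klBernoulli θ) (Ico θ 1) := by
  have hsub : Ico θ 1 ⊆ Ioo 0 1 := fun t ht ↦ ⟨hθ.1.trans_le ht.1, ht.2⟩
  refine strictMonoOn_of_deriv_pos (convex_Ico θ 1)
    (fun t ht ↦ (hasDerivAt_klBernoulli hθ (hsub ht)).continuousAt.continuousWithinAt)
    fun t ht ↦ ?_
  rw [interior_Ico] at ht
  have ht₁ := hsub (Ioo_subset_Ico_self ht)
  rw [(hasDerivAt_klBernoulli hθ ht₁).deriv]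
  exact div_pos (sub_pos.2 ht.1) (mul_pos ht₁.1 (sub_pos.2 ht₁.2))

theorem isLittleO_klBernoulli (hθ : θ ∈ Ioo 0 1) :
    (fun t ↦ klBernoulli θ t - 1 / (θ * (1 - θ)) / 2 * (t - θ) ^ 2) =o[𝓝 θ]
      fun t ↦ (t - θ) ^ 2 := by
  have hθ₁ : θ * (1 - θ) ≠ 0 := (mul_pos hθ.1 (sub_pos.2 hθ.2)).ne'
  have h₂ : HasDerivAt (fun t ↦ (t - θ) / (t * (1 - t))) (1 / (θ * (1 - θ))) θ := by
    refine ((hasDerivAt_id' θ).sub_const θ).fun_div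
      ((hasDerivAt_id' θ).fun_mul ((hasDerivAt_id' θ).const_sub 1)) hθ₁ |>.congr_deriv ?_
    rw [sub_self, zero_mul, sub_zero, one_mul, sq, div_mul_cancel_left₀ hθ₁, one_div]
  simpa [klBernoulli_self hθ] using isLittleO_sub_sub_half_mul_sq
    (Filter.eventually_of_mem (isOpen_Ioo.mem_nhds hθ) fun t ↦ hasDerivAt_klBernoulli hθ) h₂
    (by simp)

end klBernoulli

theorem laplace_normalization
    (p : ℝ → ℝ) (hp_nonneg : ∀ t ∈ Ioo (0:ℝ) 1, 0 ≤ p t)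
    (hp_cont : ContinuousOn p (Ioo (0:ℝ) 1))
    (hp_int : IntegrableOn p (Ioo (0:ℝ) 1))
    (θ₀ : ℝ) (hθ₀ : θ₀ ∈ Ioo (0:ℝ) 1) (hpθ₀ : 0 < p θ₀)
    (d : ℝ → ℝ)
    (hd : ∀ t, d t = θ₀ * Real.log (θ₀ / t) + (1 - θ₀) * Real.log ((1 - θ₀) / (1 - t))) :
    Tendsto (fun n : ℕ =>
      (∫ t in Ioo (0:ℝ) 1, p t * Real.exp (-(n : ℝ) * d t)) /
        (Real.sqrt (2 * Real.pi) * p θ₀ /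
          Real.sqrt ((n : ℝ) * (1 / (θ₀ * (1 - θ₀))))))
      atTop (nhds 1) := by
  obtain rfl : d = klBernoulli θ₀ := funext hd
  have hs : Ioo (0:ℝ) 1 ∈ 𝓝 θ₀ := isOpen_Ioo.mem_nhds hθ₀
  have hlim := tendsto_sqrt_mul_integral_mul_exp_neg_mul hs measurableSet_Ioo hp_int hp_nonneg
    (hp_cont.continuousAt hs) measurable_klBernoulli
    (one_div_pos.2 (mul_pos hθ₀.1 (sub_pos.2 hθ₀.2))) (isLittleO_klBernoulli hθ₀)
    fun δ hδ ↦ by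
      simpa only [klBernoulli_self hθ₀] using exists_gt_forall_le_of_strictAntiOn_of_strictMonoOn
        hθ₀ hδ (strictAntiOn_klBernoulli hθ₀) (strictMonoOn_klBernoulli hθ₀)
  have hratio := hlim.div_const (√(2 * π) * p θ₀)
  rw [div_self (by positivity)] at hratio
  refine hratio.congr fun n ↦ ?_
  rw [div_div_eq_mul_div, mul_comm]
end
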